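/- Let n ≥ 1 be an integer and let p, q, r be three pairwise distinct, non-collinear points of ℝ² all of whose coordinates are integers in {0, 1, …, n−1}. Let ε > 0. Let q' be a point of the segment [p, q] and r' a point of the segment [p, r] such that both q' and r' lie outside the box of radius ε centered on p (i.e., ‖q' − p‖_∞ > ε and ‖r' − p‖_∞ > ε). Then the Euclidean distance between q' and r' is at least ε/(2n²). -/

import Mathlib

/-!
Write `q' = p + s • (q - p)` and `r' = p + t • (r - p)`. Since `p, q, r` are non-collinear lattice
points, `D = cross (q - p) (r - p)` is a nonzero integer, so `1 ≤ |D|`. Bilinearity gives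
`s * D = cross (q' - r') (r - p)`, and as the coordinates of `r - p` are less than `n` in absolute
value, `s * |D| ≤ 2 * n * ‖q' - r'‖`. Finally `q'` leaves the box only if `ε < s * n`, whence
`ε ≤ s * n * |D| ≤ 2 * n ^ 2 * dist q' r'`.
-/

def IsGridPoint {ι : Type*} (n : ℕ) (p : EuclideanSpace ℝ ι) : Prop :=
  ∀ i, ∃ k : ℕ, k < n ∧ p i = k

namespace IsGridPoint

variable {ι : Type*} {n : ℕ} {p q : EuclideanSpace ℝ ι}

lemma pos [Nonempty ι] (hp : IsGridPoint n p) : 0 < n := by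
  obtain ⟨k, hk, -⟩ := hp (Classical.arbitrary ι)
  omega

lemma abs_sub_apply_lt (hq : IsGridPoint n q) (hp : IsGridPoint n p) (i : ι) :
    |(q - p) i| < n := by
  obtain ⟨a, ha, hai⟩ := hq i
  obtain ⟨b, hb, hbi⟩ := hp i
  have ha' : (a : ℝ) < n := Nat.cast_lt.2 ha
  have hb' : (b : ℝ) < n := Nat.cast_lt.2 hb
  rw [PiLp.sub_apply, hai, hbi, abs_sub_lt_iff]
  constructor <;> linarith [(Nat.cast_nonneg a : (0 : ℝ) ≤ a), (Nat.cast_nonneg b : (0 : ℝ) ≤ b)]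

lemma sub_apply_eq_intCast (hq : IsGridPoint n q) (hp : IsGridPoint n p) (i : ι) :
    ∃ k : ℤ, (q - p) i = k := by
  obtain ⟨a, -, hai⟩ := hq i
  obtain ⟨b, -, hbi⟩ := hp i
  exact ⟨a - b, by simp [hai, hbi]⟩

end IsGridPoint

def cross (u v : EuclideanSpace ℝ (Fin 2)) : ℝ := u 0 * v 1 - u 1 * v 0

lemma cross_smul_sub_smul_self (s t : ℝ) (u v : EuclideanSpace ℝ (Fin 2)) :
    cross (s • u - t • v) v = s * cross u v := by
  simp only [cross, PiLp.sub_apply, PiLp.smul_apply, smul_eq_mul]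
  ring

lemma cross_ne_zero_of_linearIndependent {u v : EuclideanSpace ℝ (Fin 2)}
    (h : LinearIndependent ℝ ![u, v]) : cross u v ≠ 0 := by
  intro h0
  -- `v 1 • u - u 1 • v` and `v 0 • u - u 0 • v` vanish when `cross u v = 0`.
  have h1 := LinearIndependent.pair_iff.1 h (v 1) (-u 1) (by
    ext i; fin_cases i <;> simp [cross] at h0 ⊢ <;> linarith)
  have h0 := LinearIndependent.pair_iff.1 h (v 0) (-u 0) (by
    ext i; fin_cases i <;> simp [cross] at h0 ⊢ <;> linarith)
  refine h.ne_zero 0 ?_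
  ext i; fin_cases i <;> simp_all

lemma cross_ne_zero_of_not_collinear {p q r : EuclideanSpace ℝ (Fin 2)}
    (h : ¬Collinear ℝ ({p, q, r} : Set (EuclideanSpace ℝ (Fin 2)))) :
    cross (q - p) (r - p) ≠ 0 := by
  have hind := (affineIndependent_iff_linearIndependent_vsub ℝ _ (0 : Fin 3)).1
    (affineIndependent_iff_not_collinear_set.2 h)
  rw [← linearIndependent_equiv (finSuccAboveEquiv (0 : Fin 3))] at hind
  have hvec : (fun i : {x // x ≠ (0 : Fin 3)} => ![p, q, r] i -ᵥ ![p, q, r] 0) ∘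
      finSuccAboveEquiv (0 : Fin 3) = ![q - p, r - p] := by
    ext i : 1
    fin_cases i <;> rfl
  exact cross_ne_zero_of_linearIndependent (hvec ▸ hind)

lemma one_le_abs_cross {u v : EuclideanSpace ℝ (Fin 2)} (hu : ∀ i, ∃ k : ℤ, u i = k)
    (hv : ∀ i, ∃ k : ℤ, v i = k) (h : cross u v ≠ 0) : 1 ≤ |cross u v| := by
  obtain ⟨a, ha⟩ := hu 0
  obtain ⟨b, hb⟩ := hu 1
  obtain ⟨c, hc⟩ := hv 0
  obtain ⟨d, hd⟩ := hv 1
  have hcast : cross u v = ((a * d - b * c : ℤ) : ℝ) := by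
    simp [cross, ha, hb, hc, hd]
  rw [hcast] at h ⊢
  exact_mod_cast Int.one_le_abs (by exact_mod_cast h)

lemma abs_cross_le {m : ℝ} (w : EuclideanSpace ℝ (Fin 2)) {v : EuclideanSpace ℝ (Fin 2)}
    (hv : ∀ i, |v i| ≤ m) : |cross w v| ≤ 2 * m * ‖w‖ := by
  have hw : ∀ i, |w i| ≤ ‖w‖ := fun i => by simpa using PiLp.norm_apply_le w i
  calc |cross w v| ≤ |w 0| * |v 1| + |w 1| * |v 0| := by
        simpa only [cross, abs_mul] using abs_sub (w 0 * v 1) (w 1 * v 0)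
    _ ≤ ‖w‖ * m + ‖w‖ * m := by gcongr <;> first | exact hw _ | exact hv _
    _ = 2 * m * ‖w‖ := by ring

lemma mul_abs_cross_le_norm_smul_sub_smul {m s : ℝ} (hs : 0 ≤ s) (t : ℝ)
    (u : EuclideanSpace ℝ (Fin 2)) {v : EuclideanSpace ℝ (Fin 2)} (hv : ∀ i, |v i| ≤ m) :
    s * |cross u v| ≤ 2 * m * ‖s • u - t • v‖ :=
  calc s * |cross u v| = |cross (s • u - t • v) v| := by
        rw [cross_smul_sub_smul_self, abs_mul, abs_of_nonneg hs]
    _ ≤ 2 * m * ‖s • u - t • v‖ := abs_cross_le _ hv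

theorem stmt3_general (n : ℕ) (p q r : EuclideanSpace ℝ (Fin 2))
    (hp : ∀ i, ∃ k : ℕ, k < n ∧ p i = k)
    (hq : ∀ i, ∃ k : ℕ, k < n ∧ q i = k)
    (hr : ∀ i, ∃ k : ℕ, k < n ∧ r i = k)
    (hncol : ¬ Collinear ℝ ({p, q, r} : Set (EuclideanSpace ℝ (Fin 2))))
    (ε : ℝ)
    (q' r' : EuclideanSpace ℝ (Fin 2))
    (hq' : q' ∈ segment ℝ p q) (hr' : r' ∈ segment ℝ p r)
    (hq'out : ε < max |q' 0 - p 0| |q' 1 - p 1|) :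
    ε / (2 * n ^ 2) ≤ dist q' r' := by
  rw [segment_eq_image'] at hq' hr'
  obtain ⟨s, ⟨hs0, -⟩, rfl⟩ := hq'
  obtain ⟨t, -, rfl⟩ := hr'
  have hn : (0 : ℝ) < n := Nat.cast_pos.2 (IsGridPoint.pos hp)
  have hD : 1 ≤ |cross (q - p) (r - p)| :=
    one_le_abs_cross (IsGridPoint.sub_apply_eq_intCast hq hp)
      (IsGridPoint.sub_apply_eq_intCast hr hp) (cross_ne_zero_of_not_collinear hncol)
  have hεs : ε < s * n := by
    refine hq'out.trans_le (max_le ?_ ?_) <;>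
    · rw [PiLp.add_apply, add_sub_cancel_left, PiLp.smul_apply, smul_eq_mul, abs_mul,
        abs_of_nonneg hs0]
      exact mul_le_mul_of_nonneg_left (IsGridPoint.abs_sub_apply_lt hq hp _).le hs0
  have hdist := mul_abs_cross_le_norm_smul_sub_smul hs0 t (q - p)
    fun i => (IsGridPoint.abs_sub_apply_lt hr hp i).le
  rw [dist_eq_norm, add_sub_add_left_eq_sub, div_le_iff₀ (by positivity)]
  calc ε ≤ s * n := hεs.le
    _ ≤ s * n * |cross (q - p) (r - p)| := le_mul_of_one_le_right (by positivity) hD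
    _ = n * (s * |cross (q - p) (r - p)|) := by ring
    _ ≤ n * (2 * n * ‖s • (q - p) - t • (r - p)‖) := by gcongr
    _ = ‖s • (q - p) - t • (r - p)‖ * (2 * n ^ 2) := by ring

/-- Lemma 4 of the paper: two segments of an integer-coordinate drawing
sharing the endpoint `p` stay at Euclidean distance at least `ε/(2n²)` from
each other once outside the box of radius `ε` (for the sup norm) around `p`. -/
theorem stmt3 (n : ℕ) (hn : 1 ≤ n) (p q r : EuclideanSpace ℝ (Fin 2))
    (hp : ∀ i, ∃ k : ℕ, k < n ∧ p i = k)
    (hq : ∀ i, ∃ k : ℕ, k < n ∧ q i = k)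
    (hr : ∀ i, ∃ k : ℕ, k < n ∧ r i = k)
    (hpq : p ≠ q) (hpr : p ≠ r) (hqr : q ≠ r)
    (hncol : ¬ Collinear ℝ ({p, q, r} : Set (EuclideanSpace ℝ (Fin 2))))
    (ε : ℝ) (hε : 0 < ε)
    (q' r' : EuclideanSpace ℝ (Fin 2))
    (hq' : q' ∈ segment ℝ p q) (hr' : r' ∈ segment ℝ p r)
    (hq'out : ε < max |q' 0 - p 0| |q' 1 - p 1|)
    (hr'out : ε < max |r' 0 - p 0| |r' 1 - p 1|) :
    ε / (2 * n ^ 2) ≤ dist q' r' :=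
  stmt3_general n p q r hp hq hr hncol ε q' r' hq' hr' hq'out
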